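/- For every integer n ≥ 3, the strong domination number of the path P_n equals ⌈n/3⌉. -/

import Mathlib

open SimpleGraph

/-- `D` is a strong dominating set of `G`: every vertex outside `D` has a neighbor
in `D` whose degree is at least its own. -/
def IsStrongDominating {V : Type*} (G : SimpleGraph V) (D : Set V) : Prop :=
  ∀ v ∉ D, ∃ u ∈ D, G.Adj v u ∧ (G.neighborSet v).ncard ≤ (G.neighborSet u).ncard

/-- The strong domination number. -/
noncomputable def gammaSt {V : Type*} (G : SimpleGraph V) : ℕ :=
  sInf {n | ∃ D : Set V, D.Finite ∧ IsStrongDominating G D ∧ D.ncard = n}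

/-- The stability of the strong domination number: the minimum size of a vertex set
whose removal changes the strong domination number. -/
noncomputable def stGammaSt {V : Type*} (G : SimpleGraph V) : ℕ :=
  sInf {n | ∃ S : Set V, S.Finite ∧ S.ncard = n ∧ gammaSt (G.induce Sᶜ) ≠ gammaSt G}

/-- The join of two graphs. -/
def joinG {V W : Type*} (G : SimpleGraph V) (H : SimpleGraph W) : SimpleGraph (V ⊕ W) :=
  SimpleGraph.fromRel (fun x y =>
    match x, y with
    | Sum.inl a, Sum.inl b => G.Adj a b
    | Sum.inr a, Sum.inr b => H.Adj a b
    | _, _ => True)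

/-- `n` disjoint copies of `K₂`. -/
def nK2 (n : ℕ) : SimpleGraph (Fin n × Fin 2) where
  Adj x y := x.1 = y.1 ∧ x.2 ≠ y.2
  symm := ⟨fun x y h => ⟨h.1.symm, h.2.symm⟩⟩
  loopless := ⟨fun x h => h.2 rfl⟩

/-!
A vertex of a graph of maximum degree `Δ` dominates at most `Δ + 1` vertices, so every
dominating set of `P_n` has at least `⌈n / 3⌉` elements. Conversely, the centres `1, 4, 7, …`
of consecutive blocks of three vertices, the last one moved to `n - 2` so that it is not an
endpoint, form a strong dominating set of that size.
-/

namespace SimpleGraph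

theorem ncard_neighborSet_eq_degree {V : Type*} (G : SimpleGraph V) (v : V)
    [Fintype (G.neighborSet v)] : (G.neighborSet v).ncard = G.degree v := by
  rw [Set.ncard_eq_toFinset_card', ← card_neighborFinset_eq_degree, neighborFinset]

open Finset in
theorem card_le_mul_ncard_of_dominating {V : Type*} [Fintype V] {G : SimpleGraph V}
    [DecidableRel G.Adj] {D : Set V} (hD : ∀ v ∉ D, ∃ u ∈ D, G.Adj v u) :
    Fintype.card V ≤ (G.maxDegree + 1) * D.ncard := by
  classical
  have hcover : (univ : Finset V) ⊆ D.toFinset.biUnion fun u ↦ insert u (G.neighborFinset u) := by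
    intro v _
    simp only [mem_biUnion, Set.mem_toFinset, mem_insert, mem_neighborFinset]
    by_cases hv : v ∈ D
    · exact ⟨v, hv, Or.inl rfl⟩
    · obtain ⟨u, hu, hadj⟩ := hD v hv
      exact ⟨u, hu, Or.inr hadj.symm⟩
  calc Fintype.card V = #univ := rfl
    _ ≤ ∑ u ∈ D.toFinset, #(insert u (G.neighborFinset u)) :=
      (card_le_card hcover).trans card_biUnion_le
    _ ≤ ∑ _u ∈ D.toFinset, (G.maxDegree + 1) := sum_le_sum fun u _ ↦
      (card_insert_le _ _).trans (by simpa using G.degree_le_maxDegree u)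
    _ = (G.maxDegree + 1) * D.ncard := by
      rw [sum_const, smul_eq_mul, mul_comm, Set.ncard_eq_toFinset_card']

instance (n : ℕ) : DecidableRel (pathGraph n).Adj :=
  fun _ _ ↦ decidable_of_iff' _ pathGraph_adj

theorem pathGraph_degree {n : ℕ} (v : Fin n) :
    (pathGraph n).degree v = (if 0 < v.val then 1 else 0) + (if v.val + 1 < n then 1 else 0) := by
  have hv := v.isLt
  rw [← card_neighborFinset_eq_degree]
  split_ifs with h0 h1 h1
  · have : (pathGraph n).neighborFinset v = {⟨v - 1, by omega⟩, ⟨v + 1, h1⟩} := by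
      ext w; simp only [mem_neighborFinset, pathGraph_adj, Finset.mem_insert, Fin.ext_iff, Finset.mem_singleton]; omega
    rw [this, Finset.card_pair (by simp [Fin.ext_iff])]
  · have : (pathGraph n).neighborFinset v = {⟨v - 1, by omega⟩} := by
      ext w; simp only [mem_neighborFinset, pathGraph_adj, Finset.mem_singleton, Fin.ext_iff]; omega
    rw [this, Finset.card_singleton]
  · have : (pathGraph n).neighborFinset v = {⟨v + 1, h1⟩} := by
      ext w; simp only [mem_neighborFinset, pathGraph_adj, Finset.mem_singleton, Fin.ext_iff]; omega
    rw [this, Finset.card_singleton]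
  · have : (pathGraph n).neighborFinset v = ∅ := by
      ext w; simp only [mem_neighborFinset, pathGraph_adj, Finset.notMem_empty, iff_false, not_or]; omega
    rw [this, Finset.card_empty]

theorem pathGraph_maxDegree_le_two (n : ℕ) : (pathGraph n).maxDegree ≤ 2 :=
  maxDegree_le_of_forall_degree_le _ _ fun v ↦ by rw [pathGraph_degree]; split_ifs <;> omega

end SimpleGraph

theorem gammaSt_le_ncard {V : Type*} {G : SimpleGraph V} {D : Set V} (hfin : D.Finite)
    (hD : IsStrongDominating G D) : gammaSt G ≤ D.ncard :=
  Nat.sInf_le ⟨D, hfin, hD, rfl⟩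

theorem le_gammaSt {V : Type*} [Finite V] {G : SimpleGraph V} {k : ℕ}
    (h : ∀ D, IsStrongDominating G D → k ≤ D.ncard) : k ≤ gammaSt G :=
  le_csInf ⟨_, Set.univ, Set.toFinite _, fun v hv ↦ absurd (Set.mem_univ v) hv, rfl⟩
    (by rintro _ ⟨D, -, hD, rfl⟩; exact h D hD)

theorem IsStrongDominating.exists_adj {V : Type*} {G : SimpleGraph V} {D : Set V}
    (hD : IsStrongDominating G D) : ∀ v ∉ D, ∃ u ∈ D, G.Adj v u :=
  fun v hv ↦ (hD v hv).imp fun _ ⟨hu, hadj, _⟩ ↦ ⟨hu, hadj⟩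

def pathBlockCenter (n : ℕ) (k : Fin ((n + 2) / 3)) : Fin n :=
  ⟨min (3 * k.val + 1) (n - 2), by have := k.isLt; omega⟩

theorem ncard_range_pathBlockCenter_le (n : ℕ) :
    (Set.range (pathBlockCenter n)).ncard ≤ (n + 2) / 3 :=
  calc (Set.range (pathBlockCenter n)).ncard ≤ (Set.univ : Set (Fin ((n + 2) / 3))).ncard := by
        rw [← Set.image_univ]; exact Set.ncard_image_le (Set.toFinite _)
    _ = (n + 2) / 3 := by rw [Set.ncard_univ, Nat.card_fin]

theorem isStrongDominating_range_pathBlockCenter (n : ℕ) :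
    IsStrongDominating (pathGraph n) (Set.range (pathBlockCenter n)) := by
  intro v hv
  have := v.isLt
  set u := pathBlockCenter n ⟨v / 3, by omega⟩
  have hu : u.val = min (3 * (v.val / 3) + 1) (n - 2) := rfl
  have huv : u.val ≠ v.val := fun h ↦ hv ⟨_, Fin.ext h⟩
  refine ⟨u, ⟨_, rfl⟩, ?_, ?_⟩
  · rw [pathGraph_adj]; omega
  · rw [ncard_neighborSet_eq_degree, ncard_neighborSet_eq_degree, pathGraph_degree,
      pathGraph_degree]
    split_ifs <;> omega

theorem gammaSt_pathGraph_general (n : ℕ) :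
    gammaSt (pathGraph n) = (n + 2) / 3 := by
  refine le_antisymm ?_ (le_gammaSt fun D hD ↦ ?_)
  · exact (gammaSt_le_ncard (Set.toFinite _) (isStrongDominating_range_pathBlockCenter n)).trans
      (ncard_range_pathBlockCenter_le n)
  · have hcard := card_le_mul_ncard_of_dominating hD.exists_adj
    rw [Fintype.card_fin] at hcard
    have hΔ := pathGraph_maxDegree_le_two n
    have : n ≤ 3 * D.ncard := hcard.trans (Nat.mul_le_mul_right _ (by omega))
    omega

theorem gammaSt_pathGraph (n : ℕ) (hn : 3 ≤ n) :
    gammaSt (pathGraph n) = (n + 2) / 3 :=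
  gammaSt_pathGraph_general n
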